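/- arXiv:1510.06449 — 2 statements merged into one kernel-verified Lean document; each statement's English description precedes it below -/
import Mathlib

section
/- Let N ≥ 1, let Ω ⊆ ℝ^N be Lebesgue measurable with |Ω| < ∞, let T > 0, and let D ∈ ℝ with D < -N. Assume Ω is Minkowski nondegenerate at infinity in dimension D, i.e., 0 < M_^D(∞,Ω) := liminf_{t→+∞} V_Ω(t)/t^{N+D} ≤ M̄^D(∞,Ω) := limsup_{t→+∞} V_Ω(t)/t^{N+D} < ∞. Then, with ζ_{∞,Ω}(s) := ∫_{{x ∈ Ω : |x| > T}} |x|^{-s-N} dx for real s > D (these integrals are finite), one has -(N+D)·M_^D(∞,Ω) ≤ liminf_{s→D⁺} (s-D)·ζ_{∞,Ω}(s) and limsup_{s→D⁺} (s-D)·ζ_{∞,Ω}(s) ≤ -(N+D)·M̄^D(∞,Ω). (In particular, if ζ_{∞,Ω} admits a meromorphic continuation to a neighborhood of D, then D is a simple pole and its residue lies between -(N+D)·M_^D(∞,Ω) and -(N+D)·M̄^D(∞,Ω).) -/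
/-!
By the layer-cake formula, for `p > 0` we have `∫ f ^ p dμ = p ∫₀^∞ μ {f > t} t ^ (p - 1) dt`.
Take `p = -s - n`. If `μ {f > t} ≤ C t ^ (n + D)` for `t ≥ t₀`, the range `t ≥ t₀` contributes
at most `p C t₀ ^ (D - s) / (s - D)` and the range `t < t₀` at most `μ univ * t₀ ^ p`. After
multiplying by `s - D`, only `(-s - n) C t₀ ^ (D - s) → -(n + D) C` survives as `s → D⁺`. A lower
tail bound `c t ^ (n + D)` gives the matching lower estimate. Letting `C` and `c` tend to the upper
and lower Minkowski contents at infinity proves the theorem.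
-/

open MeasureTheory Filter Set
open scoped Topology ENNReal

theorem lintegral_Ioc_zero_ofReal_rpow {b t₀ : ℝ} (hb : -1 < b) (ht₀ : 0 ≤ t₀) :
    ∫⁻ t in Ioc 0 t₀, ENNReal.ofReal (t ^ b) = ENNReal.ofReal (t₀ ^ (b + 1) / (b + 1)) := by
  rw [← ofReal_integral_eq_lintegral_ofReal (intervalIntegral.intervalIntegrable_rpow' hb).1
      ((ae_restrict_mem measurableSet_Ioc).mono fun t ht => Real.rpow_nonneg ht.1.le b),
    ← intervalIntegral.integral_of_le ht₀, integral_rpow (Or.inl hb),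
    Real.zero_rpow (by linarith), sub_zero]

theorem lintegral_Ioi_ofReal_rpow {b t₀ : ℝ} (hb : b < -1) (ht₀ : 0 < t₀) :
    ∫⁻ t in Ioi t₀, ENNReal.ofReal (t ^ b) = ENNReal.ofReal (t₀ ^ (b + 1) / -(b + 1)) := by
  rw [← ofReal_integral_eq_lintegral_ofReal (integrableOn_Ioi_rpow_of_lt hb ht₀)
      ((ae_restrict_mem measurableSet_Ioi).mono fun t ht => Real.rpow_nonneg (ht₀.trans ht).le b),
    integral_Ioi_rpow_of_lt hb ht₀, div_neg, neg_div]

theorem ofReal_mul_rpow_mul_ofReal_rpow {c t a b : ℝ} (hc : 0 ≤ c) (ht : 0 < t) :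
    ENNReal.ofReal (c * t ^ a) * ENNReal.ofReal (t ^ b) =
      ENNReal.ofReal c * ENNReal.ofReal (t ^ (a + b)) := by
  rw [ENNReal.ofReal_mul hc, mul_assoc, ← ENNReal.ofReal_mul (Real.rpow_nonneg ht.le a),
    ← Real.rpow_add ht]

variable {α : Type*} [MeasurableSpace α] {μ : Measure α} {f : α → ℝ}
  {p a t₀ n D : ℝ}

theorem lintegral_rpow_le_of_tail_le [IsFiniteMeasure μ] (hf₀ : 0 ≤ᵐ[μ] f)
    (hf : AEMeasurable f μ) (hp : 0 < p) (hpa : p + a < 0) (ht₀ : 0 < t₀) {C : ℝ} (hC : 0 ≤ C)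
    (htail : ∀ t ≥ t₀, μ {x | t < f x} ≤ ENNReal.ofReal (C * t ^ a)) :
    ∫⁻ x, ENNReal.ofReal (f x ^ p) ∂μ ≤
      ENNReal.ofReal (μ.real univ * t₀ ^ p + p * C * (t₀ ^ (p + a) / -(p + a))) := by
  have near : ∫⁻ t in Ioc 0 t₀, μ {x | t < f x} * ENNReal.ofReal (t ^ (p - 1)) ≤
      μ univ * ENNReal.ofReal (t₀ ^ p / p) := calc
    _ ≤ ∫⁻ t in Ioc 0 t₀, μ univ * ENNReal.ofReal (t ^ (p - 1)) := by
      gcongr; exact subset_univ _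
    _ = μ univ * ENNReal.ofReal (t₀ ^ p / p) := by
      rw [lintegral_const_mul' _ _ (measure_ne_top μ univ),
        lintegral_Ioc_zero_ofReal_rpow (by linarith) ht₀.le, sub_add_cancel]
  have far : ∫⁻ t in Ioi t₀, μ {x | t < f x} * ENNReal.ofReal (t ^ (p - 1)) ≤
      ENNReal.ofReal C * ENNReal.ofReal (t₀ ^ (p + a) / -(p + a)) := calc
    _ ≤ ∫⁻ t in Ioi t₀, ENNReal.ofReal C * ENNReal.ofReal (t ^ (a + (p - 1))) := by
      refine setLIntegral_mono' measurableSet_Ioi fun t ht => ?_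
      rw [← ofReal_mul_rpow_mul_ofReal_rpow hC (ht₀.trans ht)]
      gcongr
      exact htail t (le_of_lt ht)
    _ = ENNReal.ofReal C * ENNReal.ofReal (t₀ ^ (p + a) / -(p + a)) := by
      rw [lintegral_const_mul' _ _ ENNReal.ofReal_ne_top,
        lintegral_Ioi_ofReal_rpow (by linarith) ht₀, show a + (p - 1) + 1 = p + a by ring]
  rw [lintegral_rpow_eq_lintegral_meas_lt_mul μ hf₀ hf hp, ← Ioc_union_Ioi_eq_Ioi ht₀.le,
    lintegral_union measurableSet_Ioi Ioc_disjoint_Ioi_same]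
  refine (mul_le_mul_right (add_le_add near far) _).trans_eq ?_
  have hq : 0 ≤ t₀ ^ (p + a) / -(p + a) := div_nonneg (by positivity) (by linarith)
  rw [← ofReal_measureReal, ← ENNReal.ofReal_mul measureReal_nonneg, ← ENNReal.ofReal_mul hC,
    ← ENNReal.ofReal_add (by positivity) (by positivity), ← ENNReal.ofReal_mul hp.le]
  congr 1
  field_simp

theorem ofReal_le_lintegral_rpow_of_le_tail (hf₀ : 0 ≤ᵐ[μ] f) (hf : AEMeasurable f μ)
    (hp : 0 < p) (hpa : p + a < 0) (ht₀ : 0 < t₀) {c : ℝ} (hc : 0 ≤ c)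
    (htail : ∀ t ≥ t₀, ENNReal.ofReal (c * t ^ a) ≤ μ {x | t < f x}) :
    ENNReal.ofReal (p * c * (t₀ ^ (p + a) / -(p + a))) ≤ ∫⁻ x, ENNReal.ofReal (f x ^ p) ∂μ := by
  rw [lintegral_rpow_eq_lintegral_meas_lt_mul μ hf₀ hf hp, mul_assoc, ENNReal.ofReal_mul hp.le,
    ENNReal.ofReal_mul hc]
  gcongr
  calc ENNReal.ofReal c * ENNReal.ofReal (t₀ ^ (p + a) / -(p + a))
      = ∫⁻ t in Ioi t₀, ENNReal.ofReal c * ENNReal.ofReal (t ^ (a + (p - 1))) := by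
        rw [lintegral_const_mul' _ _ ENNReal.ofReal_ne_top,
          lintegral_Ioi_ofReal_rpow (by linarith) ht₀, show a + (p - 1) + 1 = p + a by ring]
    _ ≤ ∫⁻ t in Ioi t₀, μ {x | t < f x} * ENNReal.ofReal (t ^ (p - 1)) := by
      refine setLIntegral_mono' measurableSet_Ioi fun t ht => ?_
      rw [← ofReal_mul_rpow_mul_ofReal_rpow hc (ht₀.trans ht)]
      gcongr
      exact htail t (le_of_lt ht)
    _ ≤ ∫⁻ t in Ioi 0, μ {x | t < f x} * ENNReal.ofReal (t ^ (p - 1)) :=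
      lintegral_mono_set (Ioi_subset_Ioi ht₀.le)

theorem integrable_rpow_of_tail_le [IsFiniteMeasure μ] (hf₀ : 0 ≤ᵐ[μ] f)
    (hf : AEMeasurable f μ) (hp : 0 < p) (hpa : p + a < 0) (ht₀ : 0 < t₀) {C : ℝ} (hC : 0 ≤ C)
    (htail : ∀ t ≥ t₀, μ {x | t < f x} ≤ ENNReal.ofReal (C * t ^ a)) :
    Integrable (fun x => f x ^ p) μ :=
  ⟨(hf.pow_const p).aestronglyMeasurable, (hasFiniteIntegral_iff_ofReal
    (hf₀.mono fun _ hx => Real.rpow_nonneg hx p)).2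
    ((lintegral_rpow_le_of_tail_le hf₀ hf hp hpa ht₀ hC htail).trans_lt ENNReal.ofReal_lt_top)⟩

theorem integrable_rpow_of_le_of_nonpos [IsFiniteMeasure μ] {T : ℝ} (hT : 0 < T)
    (hfT : ∀ᵐ x ∂μ, T ≤ f x) (hf : AEMeasurable f μ) (hp : p ≤ 0) :
    Integrable (fun x => f x ^ p) μ := by
  refine (integrable_const (T ^ p)).mono' (hf.pow_const p).aestronglyMeasurable ?_
  filter_upwards [hfT] with x hx
  rw [Real.norm_of_nonneg (Real.rpow_nonneg (hT.le.trans hx) p)]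
  exact Real.rpow_le_rpow_of_nonpos hT hx hp

theorem integral_rpow_le_of_tail_le [IsFiniteMeasure μ] (hf₀ : 0 ≤ᵐ[μ] f)
    (hf : AEMeasurable f μ) (hp : 0 < p) (hpa : p + a < 0) (ht₀ : 0 < t₀) {C : ℝ} (hC : 0 ≤ C)
    (htail : ∀ t ≥ t₀, μ {x | t < f x} ≤ ENNReal.ofReal (C * t ^ a)) :
    ∫ x, f x ^ p ∂μ ≤ μ.real univ * t₀ ^ p + p * C * (t₀ ^ (p + a) / -(p + a)) := by
  have hq : 0 ≤ t₀ ^ (p + a) / -(p + a) := div_nonneg (by positivity) (by linarith)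
  rw [integral_eq_lintegral_of_nonneg_ae (hf₀.mono fun _ hx => Real.rpow_nonneg hx p)
    (hf.pow_const p).aestronglyMeasurable]
  exact ENNReal.toReal_le_of_le_ofReal (by positivity)
    (lintegral_rpow_le_of_tail_le hf₀ hf hp hpa ht₀ hC htail)

theorem le_integral_rpow_of_le_tail (hf₀ : 0 ≤ᵐ[μ] f) (hf : AEMeasurable f μ)
    (hint : Integrable (fun x => f x ^ p) μ) (hp : 0 < p) (hpa : p + a < 0) (ht₀ : 0 < t₀)
    {c : ℝ} (hc : 0 ≤ c) (htail : ∀ t ≥ t₀, ENNReal.ofReal (c * t ^ a) ≤ μ {x | t < f x}) :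
    p * c * (t₀ ^ (p + a) / -(p + a)) ≤ ∫ x, f x ^ p ∂μ := by
  have hnn : 0 ≤ᵐ[μ] fun x => f x ^ p := hf₀.mono fun _ hx => Real.rpow_nonneg hx p
  have h := ofReal_le_lintegral_rpow_of_le_tail hf₀ hf hp hpa ht₀ hc htail
  rwa [← ofReal_integral_eq_lintegral_ofReal hint hnn,
    ENNReal.ofReal_le_ofReal_iff (integral_nonneg_of_ae hnn)] at h

theorem eventually_le_ofReal_mul_rpow_of_limsup_lt {V : ℝ → ℝ≥0∞} {C : ℝ}
    (h : limsup (fun t => V t / ENNReal.ofReal (t ^ a)) atTop < ENNReal.ofReal C) :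
    ∀ᶠ t in atTop, V t ≤ ENNReal.ofReal (C * t ^ a) := by
  filter_upwards [eventually_lt_of_limsup_lt h, eventually_gt_atTop 0] with t ht htpos
  have hC : 0 ≤ C := (ENNReal.ofReal_pos.1 (pos_of_gt ht)).le
  rw [ENNReal.ofReal_mul hC]
  exact (ENNReal.div_le_iff (ENNReal.ofReal_pos.2 (Real.rpow_pos_of_pos htpos a)).ne'
    ENNReal.ofReal_ne_top).1 ht.le

theorem eventually_ofReal_mul_rpow_le_of_lt_liminf {V : ℝ → ℝ≥0∞} {c : ℝ} (hc : 0 ≤ c)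
    (h : ENNReal.ofReal c < liminf (fun t => V t / ENNReal.ofReal (t ^ a)) atTop) :
    ∀ᶠ t in atTop, ENNReal.ofReal (c * t ^ a) ≤ V t := by
  filter_upwards [eventually_lt_of_lt_liminf h, eventually_gt_atTop 0] with t ht htpos
  rw [ENNReal.ofReal_mul hc]
  exact (ENNReal.le_div_iff_mul_le
    (Or.inl (ENNReal.ofReal_pos.2 (Real.rpow_pos_of_pos htpos a)).ne')
    (Or.inl ENNReal.ofReal_ne_top)).1 ht.le

theorem exists_pos_forall_ge_of_eventually {P : ℝ → Prop} (h : ∀ᶠ t in atTop, P t) :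
    ∃ t₀ > 0, ∀ t ≥ t₀, P t := by
  obtain ⟨t₀, ht₀⟩ := eventually_atTop.1 (h.and (eventually_gt_atTop 0))
  exact ⟨t₀, (ht₀ t₀ le_rfl).2, fun t ht => (ht₀ t ht).1⟩

theorem le_mul_toReal_of_forall_lt_ofReal {U : ℝ≥0∞} (hU : U ≠ ⊤) {k x : ℝ}
    (h : ∀ C : ℝ, U < ENNReal.ofReal C → x ≤ k * C) : x ≤ k * U.toReal :=
  ge_of_tendsto (((continuous_const_mul k).tendsto _).mono_left (nhdsWithin_le_nhds (s := Ioi _)))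
    (eventually_nhdsWithin_of_forall fun C hC => h C ((ENNReal.lt_ofReal_iff_toReal_lt hU).2 hC))

theorem mul_toReal_le_of_forall_ofReal_lt {L : ℝ≥0∞} (hL : L ≠ ⊤) {k x : ℝ} (hx : 0 ≤ x)
    (h : ∀ c : ℝ, 0 < c → ENNReal.ofReal c < L → k * c ≤ x) : k * L.toReal ≤ x := by
  rcases eq_or_ne L 0 with rfl | hL₀
  · simpa using hx
  refine le_of_tendsto (((continuous_const_mul k).tendsto _).mono_left
    (nhdsWithin_le_nhds (s := Iio L.toReal))) ?_
  filter_upwards [Ioo_mem_nhdsLT (ENNReal.toReal_pos hL₀ hL)] with c hc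
  exact h c hc.1 ((ENNReal.ofReal_lt_iff_lt_toReal hc.1.le hL).2 hc.2)

theorem eventually_nonneg_sub_mul_integral_rpow (hf₀ : 0 ≤ᵐ[μ] f) :
    ∀ᶠ s in 𝓝[>] D, 0 ≤ (s - D) * ∫ x, f x ^ (-s - n) ∂μ := by
  filter_upwards [self_mem_nhdsWithin] with s hs
  exact mul_nonneg (sub_nonneg.2 (le_of_lt hs))
    (integral_nonneg_of_ae (hf₀.mono fun _ hx => Real.rpow_nonneg hx _))

theorem tendsto_sub_mul_rpow_add_mul_rpow (ht₀ : 0 < t₀) (m C : ℝ) :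
    Tendsto (fun s => (s - D) * m * t₀ ^ (-s - n) + (-s - n) * C * t₀ ^ (D - s)) (𝓝[>] D)
      (𝓝 (-(n + D) * C)) := by
  have hcont : Continuous fun s => (s - D) * m * t₀ ^ (-s - n) + (-s - n) * C * t₀ ^ (D - s) := by
    have := Real.continuous_const_rpow ht₀.ne'
    fun_prop
  convert (hcont.tendsto D).mono_left nhdsWithin_le_nhds using 2
  simp only [sub_self, zero_mul, Real.rpow_zero]
  ring

theorem exists_eventually_sub_mul_integral_rpow_le [IsFiniteMeasure μ] (hf₀ : 0 ≤ᵐ[μ] f)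
    (hf : AEMeasurable f μ) (hnD : D < -n) {C : ℝ} (hC : 0 ≤ C)
    (htail : ∀ᶠ t in atTop, μ {x | t < f x} ≤ ENNReal.ofReal (C * t ^ (n + D))) :
    ∃ t₀ > 0, ∀ᶠ s in 𝓝[>] D, (s - D) * ∫ x, f x ^ (-s - n) ∂μ ≤
      (s - D) * μ.real univ * t₀ ^ (-s - n) + (-s - n) * C * t₀ ^ (D - s) := by
  obtain ⟨t₀, ht₀, htail⟩ := exists_pos_forall_ge_of_eventually htail
  refine ⟨t₀, ht₀, ?_⟩
  filter_upwards [Ioo_mem_nhdsGT hnD] with s ⟨hDs, hsn⟩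
  have h := integral_rpow_le_of_tail_le hf₀ hf (p := -s - n) (by linarith) (by linarith) ht₀ hC
    htail
  rw [show -s - n + (n + D) = D - s by ring, neg_sub] at h
  calc _ ≤ (s - D) * (μ.real univ * t₀ ^ (-s - n) + (-s - n) * C * (t₀ ^ (D - s) / (s - D))) :=
        mul_le_mul_of_nonneg_left h (by linarith)
    _ = _ := by
      field_simp [(sub_pos.2 hDs).ne']

theorem limsup_sub_mul_integral_rpow_le_of_tail_le [IsFiniteMeasure μ] (hf₀ : 0 ≤ᵐ[μ] f)
    (hf : AEMeasurable f μ) (hnD : D < -n) {C : ℝ} (hC : 0 ≤ C)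
    (htail : ∀ᶠ t in atTop, μ {x | t < f x} ≤ ENNReal.ofReal (C * t ^ (n + D))) :
    limsup (fun s => (s - D) * ∫ x, f x ^ (-s - n) ∂μ) (𝓝[>] D) ≤ -(n + D) * C := by
  obtain ⟨t₀, ht₀, hle⟩ := exists_eventually_sub_mul_integral_rpow_le hf₀ hf hnD hC htail
  have hg := tendsto_sub_mul_rpow_add_mul_rpow (n := n) (D := D) ht₀ (μ.real univ) C
  exact (limsup_le_limsup hle (isCoboundedUnder_le_of_eventually_le _
    (eventually_nonneg_sub_mul_integral_rpow hf₀)) hg.isBoundedUnder_le).trans_eq hg.limsup_eq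

theorem isBoundedUnder_le_sub_mul_integral_rpow_of_tail_le [IsFiniteMeasure μ]
    (hf₀ : 0 ≤ᵐ[μ] f) (hf : AEMeasurable f μ) (hnD : D < -n) {C : ℝ} (hC : 0 ≤ C)
    (htail : ∀ᶠ t in atTop, μ {x | t < f x} ≤ ENNReal.ofReal (C * t ^ (n + D))) :
    IsBoundedUnder (· ≤ ·) (𝓝[>] D) fun s => (s - D) * ∫ x, f x ^ (-s - n) ∂μ := by
  obtain ⟨t₀, ht₀, hle⟩ := exists_eventually_sub_mul_integral_rpow_le hf₀ hf hnD hC htail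
  exact (tendsto_sub_mul_rpow_add_mul_rpow ht₀ _ C).isBoundedUnder_le.mono_le hle

theorem le_liminf_sub_mul_integral_rpow_of_le_tail (hf₀ : 0 ≤ᵐ[μ] f) (hf : AEMeasurable f μ)
    (hnD : D < -n) (hint : ∀ᶠ s in 𝓝[>] D, Integrable (fun x => f x ^ (-s - n)) μ)
    (hbdd : IsBoundedUnder (· ≤ ·) (𝓝[>] D) fun s => (s - D) * ∫ x, f x ^ (-s - n) ∂μ)
    {c : ℝ} (hc : 0 ≤ c)
    (htail : ∀ᶠ t in atTop, ENNReal.ofReal (c * t ^ (n + D)) ≤ μ {x | t < f x}) :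
    -(n + D) * c ≤ liminf (fun s => (s - D) * ∫ x, f x ^ (-s - n) ∂μ) (𝓝[>] D) := by
  obtain ⟨t₀, ht₀, htail⟩ := exists_pos_forall_ge_of_eventually htail
  have hle : ∀ᶠ s in 𝓝[>] D, (-s - n) * c * t₀ ^ (D - s) ≤ (s - D) * ∫ x, f x ^ (-s - n) ∂μ := by
    filter_upwards [Ioo_mem_nhdsGT hnD, hint] with s ⟨hDs, hsn⟩ hint
    have h := le_integral_rpow_of_le_tail hf₀ hf hint (by linarith) (by linarith) ht₀ hc htail
    rw [show -s - n + (n + D) = D - s by ring, neg_sub] at h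
    calc _ = (s - D) * ((-s - n) * c * (t₀ ^ (D - s) / (s - D))) := by
          field_simp [(sub_pos.2 hDs).ne']
      _ ≤ _ := mul_le_mul_of_nonneg_left h (by linarith)
  have hg : Tendsto (fun s => (-s - n) * c * t₀ ^ (D - s)) (𝓝[>] D) (𝓝 (-(n + D) * c)) := by
    simpa using tendsto_sub_mul_rpow_add_mul_rpow (n := n) (D := D) ht₀ 0 c
  exact hg.liminf_eq.symm.trans_le
    (liminf_le_liminf hle hg.isBoundedUnder_ge hbdd.isCoboundedUnder_ge)

/- With `μ = volume.restrict Ω`, `f = ‖·‖` and `d = N + D`, `upperTailContent` and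
`lowerTailContent` are the upper and lower Minkowski contents `M̄^D(∞, Ω)` and `M_^D(∞, Ω)`. -/
variable (μ f) in
noncomputable def upperTailContent (d : ℝ) : ℝ≥0∞ :=
  limsup (fun t => μ {x | t < f x} / ENNReal.ofReal (t ^ d)) atTop

variable (μ f) in
noncomputable def lowerTailContent (d : ℝ) : ℝ≥0∞ :=
  liminf (fun t => μ {x | t < f x} / ENNReal.ofReal (t ^ d)) atTop

theorem exists_eventually_tail_le_of_upperTailContent_ne_top (hU : upperTailContent μ f a ≠ ⊤) :
    ∃ C ≥ 0, ∀ᶠ t in atTop, μ {x | t < f x} ≤ ENNReal.ofReal (C * t ^ a) :=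
  ⟨_, by positivity, eventually_le_ofReal_mul_rpow_of_limsup_lt
    ((ENNReal.lt_ofReal_iff_toReal_lt hU).2 (lt_add_one _))⟩

theorem integrable_rpow_of_upperTailContent_ne_top [IsFiniteMeasure μ] (hf₀ : 0 ≤ᵐ[μ] f)
    (hf : AEMeasurable f μ) (hU : upperTailContent μ f (n + D) ≠ ⊤) {s : ℝ} (hDs : D < s)
    (hsn : s < -n) : Integrable (fun x => f x ^ (-s - n)) μ := by
  obtain ⟨_, hC, htail⟩ := exists_eventually_tail_le_of_upperTailContent_ne_top hU
  obtain ⟨t₀, ht₀, htail⟩ := exists_pos_forall_ge_of_eventually htail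
  exact integrable_rpow_of_tail_le hf₀ hf (by linarith) (by linarith) ht₀ hC htail

theorem limsup_sub_mul_integral_rpow_le [IsFiniteMeasure μ] (hf₀ : 0 ≤ᵐ[μ] f)
    (hf : AEMeasurable f μ) (hnD : D < -n) (hU : upperTailContent μ f (n + D) ≠ ⊤) :
    limsup (fun s => (s - D) * ∫ x, f x ^ (-s - n) ∂μ) (𝓝[>] D) ≤
      -(n + D) * (upperTailContent μ f (n + D)).toReal :=
  le_mul_toReal_of_forall_lt_ofReal hU fun _ hC =>
    limsup_sub_mul_integral_rpow_le_of_tail_le hf₀ hf hnD (ENNReal.ofReal_pos.1 (pos_of_gt hC)).le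
      (eventually_le_ofReal_mul_rpow_of_limsup_lt hC)

theorem le_liminf_sub_mul_integral_rpow [IsFiniteMeasure μ] (hf₀ : 0 ≤ᵐ[μ] f)
    (hf : AEMeasurable f μ) (hnD : D < -n) (hU : upperTailContent μ f (n + D) ≠ ⊤) :
    -(n + D) * (lowerTailContent μ f (n + D)).toReal ≤
      liminf (fun s => (s - D) * ∫ x, f x ^ (-s - n) ∂μ) (𝓝[>] D) := by
  obtain ⟨C, hC, htail⟩ := exists_eventually_tail_le_of_upperTailContent_ne_top hU
  have hbdd := isBoundedUnder_le_sub_mul_integral_rpow_of_tail_le hf₀ hf hnD hC htail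
  have hint : ∀ᶠ s in 𝓝[>] D, Integrable (fun x => f x ^ (-s - n)) μ := by
    filter_upwards [Ioo_mem_nhdsGT hnD] with s hs
    exact integrable_rpow_of_upperTailContent_ne_top hf₀ hf hU hs.1 hs.2
  refine mul_toReal_le_of_forall_ofReal_lt (ne_top_of_le_ne_top hU liminf_le_limsup)
    (le_liminf_of_le hbdd.isCoboundedUnder_ge (eventually_nonneg_sub_mul_integral_rpow hf₀))
    fun c hc hcL => ?_
  exact le_liminf_sub_mul_integral_rpow_of_le_tail hf₀ hf hnD hint hbdd hc.le
    (eventually_ofReal_mul_rpow_le_of_lt_liminf hc.le hcL)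

theorem stmt_14_general (N : ℕ)
    (Ω : Set (EuclideanSpace ℝ (Fin N)))
    (hfin : volume Ω < ⊤)
    (T : ℝ) (hT : 0 < T) (D : ℝ) (hDN : D < -(N : ℝ))
    (hup : limsup (fun t : ℝ =>
        volume {x ∈ Ω | t < ‖x‖} / ENNReal.ofReal (t ^ ((N : ℝ) + D))) atTop < ⊤) :
    (∀ s : ℝ, D < s →
      IntegrableOn (fun x : EuclideanSpace ℝ (Fin N) => ‖x‖ ^ (-s - (N : ℝ)))
        {x ∈ Ω | T < ‖x‖} volume) ∧
    -((N : ℝ) + D) *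
        (liminf (fun t : ℝ =>
          volume {x ∈ Ω | t < ‖x‖} / ENNReal.ofReal (t ^ ((N : ℝ) + D))) atTop).toReal ≤
      liminf (fun s : ℝ =>
        (s - D) * ∫ x in {x ∈ Ω | T < ‖x‖}, ‖x‖ ^ (-s - (N : ℝ))) (𝓝[>] D) ∧
    limsup (fun s : ℝ =>
        (s - D) * ∫ x in {x ∈ Ω | T < ‖x‖}, ‖x‖ ^ (-s - (N : ℝ))) (𝓝[>] D) ≤
      -((N : ℝ) + D) *
        (limsup (fun t : ℝ =>
          volume {x ∈ Ω | t < ‖x‖} / ENNReal.ofReal (t ^ ((N : ℝ) + D))) atTop).toReal := by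
  set μ := volume.restrict {x ∈ Ω | T < ‖x‖}
  have : IsFiniteMeasure μ :=
    isFiniteMeasure_restrict.2 ((measure_mono (sep_subset _ _)).trans_lt hfin).ne
  have hf₀ : 0 ≤ᵐ[μ] fun x => ‖x‖ := ae_of_all _ norm_nonneg
  have hf : AEMeasurable (fun x => ‖x‖) μ := measurable_norm.aemeasurable
  have htail : ∀ᶠ t in atTop, μ {x | t < ‖x‖} / ENNReal.ofReal (t ^ ((N : ℝ) + D)) =
      volume {x ∈ Ω | t < ‖x‖} / ENNReal.ofReal (t ^ ((N : ℝ) + D)) := by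
    filter_upwards [eventually_ge_atTop T] with t ht
    rw [Measure.restrict_apply (measurableSet_lt measurable_const measurable_norm)]
    congr 2
    ext x
    exact ⟨fun ⟨hx, hxΩ, _⟩ => ⟨hxΩ, hx⟩, fun ⟨hxΩ, hx⟩ => ⟨hx, hxΩ, ht.trans_lt hx⟩⟩
  have hU : upperTailContent μ (‖·‖) (N + D) ≠ ⊤ := (limsup_congr htail).trans_lt hup |>.ne
  refine ⟨fun s hs => ?_, (liminf_congr htail) ▸ le_liminf_sub_mul_integral_rpow hf₀ hf hDN hU,
    (limsup_congr htail) ▸ limsup_sub_mul_integral_rpow_le hf₀ hf hDN hU⟩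
  rcases lt_or_ge s (-N) with hsN | hsN
  · exact integrable_rpow_of_upperTailContent_ne_top hf₀ hf hU hs hsN
  · refine integrable_rpow_of_le_of_nonpos hT ?_ hf (by linarith)
    exact (ae_restrict_iff (measurableSet_le measurable_const measurable_norm)).2
      (ae_of_all _ fun x hx => hx.2.le)

/-- For measurable `Ω ⊆ ℝ^N` with `|Ω| < ∞`, `T > 0`, and `D < -N`, if `Ω`
is Minkowski nondegenerate at infinity in dimension `D`, i.e.
`0 < M_^D(∞,Ω) ≤ M̄^D(∞,Ω) < ∞`, then the integrals
`ζ_{∞,Ω}(s) = ∫_{{x∈Ω:|x|>T}} |x|^{-s-N} dx` are finite for real `s > D` and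
`-(N+D)·M_^D(∞,Ω) ≤ liminf_{s→D⁺} (s-D)·ζ_{∞,Ω}(s)` and
`limsup_{s→D⁺} (s-D)·ζ_{∞,Ω}(s) ≤ -(N+D)·M̄^D(∞,Ω)`. -/
theorem stmt_14 (N : ℕ) (hN : 1 ≤ N)
    (Ω : Set (EuclideanSpace ℝ (Fin N)))
    (hΩ : MeasurableSet Ω) (hfin : volume Ω < ⊤)
    (T : ℝ) (hT : 0 < T) (D : ℝ) (hDN : D < -(N : ℝ))
    (hlow : 0 < liminf (fun t : ℝ =>
        volume {x ∈ Ω | t < ‖x‖} / ENNReal.ofReal (t ^ ((N : ℝ) + D))) atTop)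
    (hup : limsup (fun t : ℝ =>
        volume {x ∈ Ω | t < ‖x‖} / ENNReal.ofReal (t ^ ((N : ℝ) + D))) atTop < ⊤) :
    (∀ s : ℝ, D < s →
      IntegrableOn (fun x : EuclideanSpace ℝ (Fin N) => ‖x‖ ^ (-s - (N : ℝ)))
        {x ∈ Ω | T < ‖x‖} volume) ∧
    -((N : ℝ) + D) *
        (liminf (fun t : ℝ =>
          volume {x ∈ Ω | t < ‖x‖} / ENNReal.ofReal (t ^ ((N : ℝ) + D))) atTop).toReal ≤
      liminf (fun s : ℝ =>
        (s - D) * ∫ x in {x ∈ Ω | T < ‖x‖}, ‖x‖ ^ (-s - (N : ℝ))) (𝓝[>] D) ∧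
    limsup (fun s : ℝ =>
        (s - D) * ∫ x in {x ∈ Ω | T < ‖x‖}, ‖x‖ ^ (-s - (N : ℝ))) (𝓝[>] D) ≤
      -((N : ℝ) + D) *
        (limsup (fun t : ℝ =>
          volume {x ∈ Ω | t < ‖x‖} / ENNReal.ofReal (t ^ ((N : ℝ) + D))) atTop).toReal :=
  stmt_14_general N Ω hfin T hT D hDN hup
end

section
/- Let N ≥ 2, let Ω ⊆ ℝ^N be Lebesgue measurable with |Ω| < ∞, and suppose Ω is contained in a cylinder {x ∈ ℝ^N : x₂² + x₃² + ⋯ + x_N² ≤ C} for some C > 0. Let T > 0 and let D ∈ ℝ be such that for every r > D, limsup_{t→+∞} V_Ω(t)/t^{N+r} = 0 (i.e., D is at least the upper box dimension of Ω at infinity). Then there exists a function F holomorphic on the half-plane {s ∈ ℂ : Re s > D - 2} such that for every s with Re s > D, F(s) = ∫_{{x ∈ Ω : |x| > T}} |x|^{-s-N} dx - ∫_{{x ∈ Ω : |x| > T}} |x|_∞^{-s-N} dx, where |x| is the Euclidean norm and |x|_∞ := max_{1≤i≤N} |x_i| is the sup-norm. In other words, the difference of the Lapidus zeta functions of Ω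 at infinity computed with the Euclidean and the sup-norm extends holomorphically to {Re s > D - 2}. -/
/-!
On the cylinder all coordinates but the first are bounded, so `|x|² - |x|_∞² ≤ C`, that is,
`|x| - |x|_∞ = O(1 / |x|)`. By the mean value theorem the integrands `|x| ^ (-s-N)` and
`|x|_∞ ^ (-s-N)` then differ by `O(|x| ^ (-Re s - N - 2))`. The tail hypothesis on `V_Ω`, summed
over dyadic shells, makes `∫_{|x|>T} |x| ^ (-q-N)` finite for every `q > D`. Hence the integrand
of the difference is dominated locally uniformly on `Re s > D - 2`, and Cauchy's estimates allow
differentiating under the integral sign there.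
-/

open MeasureTheory Filter Set Metric
open scoped Topology ENNReal

theorem rpow_le_rpow_add_rpow_of_exponent_mem_Icc {y p₁ p p₂ : ℝ} (hy : 0 < y)
    (hp : p ∈ Icc p₁ p₂) : y ^ p ≤ y ^ p₁ + y ^ p₂ := by
  rcases le_or_gt 1 y with hy1 | hy1
  · exact (Real.rpow_le_rpow_of_exponent_le hy1 hp.2).trans
      (le_add_of_nonneg_left (by positivity))
  · exact (Real.rpow_le_rpow_of_exponent_ge hy hy1.le hp.1).trans
      (le_add_of_nonneg_right (by positivity))

theorem rpow_le_rpow_add_rpow_of_base_mem_Icc {u v y : ℝ} (hu : 0 < u) (hy : y ∈ Icc u v)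
    (p : ℝ) : y ^ p ≤ u ^ p + v ^ p := by
  have hy0 : 0 < y := hu.trans_le hy.1
  rcases le_or_gt 0 p with hp | hp
  · exact (Real.rpow_le_rpow hy0.le hy.2 hp).trans (le_add_of_nonneg_left (by positivity))
  · exact (Real.rpow_le_rpow_of_nonpos hu hy.1 hp.le).trans
      (le_add_of_nonneg_right (Real.rpow_nonneg (hu.le.trans (hy.1.trans hy.2)) p))

theorem rpow_le_rpow_abs_mul_rpow {t b K : ℝ} (ht : 0 < t) (htb : t ≤ b) (hbK : b ≤ K * t)
    (p : ℝ) : t ^ p ≤ K ^ |p| * b ^ p := by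
  have hK : 1 ≤ K := by nlinarith
  have hK0 : 0 < K := by linarith
  have hb : 0 < b := ht.trans_le htb
  rcases le_or_gt 0 p with hp | hp
  · rw [abs_of_nonneg hp]
    exact (Real.rpow_le_rpow ht.le htb hp).trans
      (le_mul_of_one_le_left (by positivity) (Real.one_le_rpow hK hp))
  · have hbK' : b / K ≤ t := by rwa [div_le_iff₀ hK0, mul_comm]
    calc t ^ p ≤ (b / K) ^ p := Real.rpow_le_rpow_of_nonpos (by positivity) hbK' hp.le
      _ = K ^ |p| * b ^ p := by
        rw [abs_of_neg hp, Real.div_rpow hb.le hK0.le, Real.rpow_neg hK0.le, div_eq_inv_mul]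

theorem norm_ofReal_cpow_sub_ofReal_cpow_le {a b M : ℝ} (ha : 0 < a) (hab : a ≤ b) (w : ℂ)
    (hM : ∀ t ∈ Icc a b, t ^ (w.re - 1) ≤ M) :
    ‖(b : ℂ) ^ w - (a : ℂ) ^ w‖ ≤ ‖w‖ * M * (b - a) := by
  have hderiv : ∀ t ∈ Icc a b,
      HasDerivAt (fun y : ℝ => (y : ℂ) ^ w) (w * (t : ℂ) ^ (w - 1)) t := fun t ht =>
    (Complex.hasStrictDerivAt_cpow_const
      (Complex.ofReal_mem_slitPlane.2 (ha.trans_le ht.1))).hasDerivAt.comp_ofReal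
  refine norm_image_sub_le_of_norm_deriv_le_segment' (fun t ht => (hderiv t ht).hasDerivWithinAt)
    (fun t ht => ?_) b ⟨hab, le_rfl⟩
  rw [norm_mul, Complex.norm_cpow_eq_rpow_re_of_pos (ha.trans_le ht.1), Complex.sub_re,
    Complex.one_re]
  exact mul_le_mul_of_nonneg_left (hM t (Ico_subset_Icc_self ht)) (norm_nonneg w)

/-- The derivative `w t ^ (w - 1)` costs one power of `b`, and `b - a ≤ C / b` another. -/
theorem norm_ofReal_cpow_sub_ofReal_cpow_le_of_sq_sub_sq_le {a b K C : ℝ} (ha : 0 < a)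
    (hab : a ≤ b) (hbK : b ≤ K * a) (hC : b ^ 2 - a ^ 2 ≤ C) (w : ℂ) :
    ‖(b : ℂ) ^ w - (a : ℂ) ^ w‖ ≤ ‖w‖ * K ^ |w.re - 1| * C * b ^ (w.re - 2) := by
  have hb : 0 < b := ha.trans_le hab
  have hK : 0 < K := pos_of_mul_pos_left (hb.trans_le hbK) ha.le
  have hM : ∀ t ∈ Icc a b, t ^ (w.re - 1) ≤ K ^ |w.re - 1| * b ^ (w.re - 1) := fun t ht =>
    rpow_le_rpow_abs_mul_rpow (ha.trans_le ht.1) ht.2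
      (hbK.trans (mul_le_mul_of_nonneg_left ht.1 hK.le)) _
  have hba : b * (b - a) ≤ C := by nlinarith
  calc ‖(b : ℂ) ^ w - (a : ℂ) ^ w‖ ≤ ‖w‖ * (K ^ |w.re - 1| * b ^ (w.re - 1)) * (b - a) :=
        norm_ofReal_cpow_sub_ofReal_cpow_le ha hab w hM
    _ = ‖w‖ * K ^ |w.re - 1| * (b * (b - a)) * b ^ (w.re - 2) := by
        rw [show w.re - 1 = w.re - 2 + 1 by ring, Real.rpow_add_one hb.ne']
        ring
    _ ≤ ‖w‖ * K ^ |w.re - 1| * C * b ^ (w.re - 2) := by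
        gcongr

/-- The derivative is the pointwise limit of the difference quotients along `s₀ + r / (2n + 2)`. -/
theorem aestronglyMeasurable_deriv_of_forall_mem_ball {α 𝕜 E : Type*} [MeasurableSpace α]
    {μ : Measure α} [RCLike 𝕜] [NormedAddCommGroup E] [NormedSpace 𝕜 E]
    {F : 𝕜 → α → E} {s₀ : 𝕜} {r : ℝ} (hr : 0 < r)
    (hF_meas : ∀ s ∈ ball s₀ r, AEStronglyMeasurable (F s) μ)
    (hF_diff : ∀ᵐ a ∂μ, DifferentiableAt 𝕜 (F · a) s₀) :
    AEStronglyMeasurable (fun a => deriv (F · a) s₀) μ := by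
  set h : ℕ → 𝕜 := fun n => ((r / 2 / (n + 1) : ℝ) : 𝕜)
  have h_pos : ∀ n : ℕ, 0 < r / 2 / (n + 1) := fun n => by positivity
  have h_mem : ∀ n, s₀ + h n ∈ ball s₀ r := fun n => by
    rw [mem_ball, dist_self_add_left, RCLike.norm_ofReal, abs_of_pos (h_pos n)]
    calc r / 2 / (n + 1) ≤ r / 2 :=
          div_le_self (half_pos hr).le (le_add_of_nonneg_left n.cast_nonneg)
      _ < r := half_lt_self hr
  have h_lim : Tendsto h atTop (𝓝[≠] 0) := by
    refine tendsto_nhdsWithin_iff.2 ⟨?_, Eventually.of_forall fun n => ?_⟩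
    · have h_real : Tendsto (fun n : ℕ => r / 2 / ((n : ℝ) + 1)) atTop (𝓝 0) := by
        simpa [div_eq_mul_one_div (r / 2)] using
          (tendsto_one_div_add_atTop_nhds_zero_nat (𝕜 := ℝ)).const_mul (r / 2)
      rw [← RCLike.ofReal_zero]
      exact (RCLike.continuous_ofReal.tendsto 0).comp h_real
    · exact RCLike.ofReal_ne_zero.2 (h_pos n).ne'
  refine aestronglyMeasurable_of_tendsto_ae atTop
    (f := fun n a => (h n)⁻¹ • (F (s₀ + h n) a - F s₀ a)) (fun n => ?_) ?_
  · exact ((hF_meas _ (h_mem n)).sub (hF_meas _ (mem_ball_self hr))).const_smul _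
  · filter_upwards [hF_diff] with a ha
    exact (hasDerivAt_iff_tendsto_slope_zero.1 ha.hasDerivAt).comp h_lim

theorem differentiableAt_integral_of_dominated {α E : Type*} [MeasurableSpace α]
    {μ : Measure α} [NormedAddCommGroup E] [NormedSpace ℂ E]
    {F : ℂ → α → E} {s₀ : ℂ} {r : ℝ} (hr : 0 < r) {bound : α → ℝ}
    (hF_meas : ∀ s ∈ ball s₀ r, AEStronglyMeasurable (F s) μ)
    (hF_diff : ∀ᵐ a ∂μ, DifferentiableOn ℂ (F · a) (ball s₀ r))
    (hF_le : ∀ᵐ a ∂μ, ∀ s ∈ ball s₀ r, ‖F s a‖ ≤ bound a)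
    (h_int : Integrable bound μ) :
    DifferentiableAt ℂ (fun s => ∫ a, F s a ∂μ) s₀ := by
  have hr2 : 0 < r / 2 := half_pos hr
  have hball : ∀ s ∈ ball s₀ (r / 2), closedBall s (r / 2) ⊆ ball s₀ r := fun s hs =>
    closedBall_subset_ball' (by rw [mem_ball] at hs; linarith)
  -- Cauchy's estimate turns the bound on `F` into a bound on its derivative.
  have hF'_le : ∀ᵐ a ∂μ, ∀ s ∈ ball s₀ (r / 2), ‖deriv (F · a) s‖ ≤ bound a / (r / 2) := by
    filter_upwards [hF_diff, hF_le] with a hdiff hle s hs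
    refine Complex.norm_deriv_le_of_forall_mem_sphere_norm_le hr2 ?_ fun z hz => hle z ?_
    · exact (hdiff.mono ((closure_ball_subset_closedBall).trans (hball s hs))).diffContOnCl
    · exact hball s hs (sphere_subset_closedBall hz)
  have hF'_deriv : ∀ᵐ a ∂μ, ∀ s ∈ ball s₀ (r / 2), HasDerivAt (F · a) (deriv (F · a) s) s := by
    filter_upwards [hF_diff] with a hdiff s hs
    exact (hdiff.differentiableAt (isOpen_ball.mem_nhds
      (ball_subset_ball (half_le_self hr.le) hs))).hasDerivAt
  have hF'_meas : AEStronglyMeasurable (fun a => deriv (F · a) s₀) μ :=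
    aestronglyMeasurable_deriv_of_forall_mem_ball hr hF_meas
      (hF_diff.mono fun a ha => ha.differentiableAt (isOpen_ball.mem_nhds (mem_ball_self hr)))
  exact (hasDerivAt_integral_of_dominated_loc_of_deriv_le (ball_mem_nhds s₀ hr2)
    (eventually_of_mem (ball_mem_nhds s₀ hr) hF_meas)
    (h_int.mono' (hF_meas s₀ (mem_ball_self hr)) (hF_le.mono fun a ha => ha s₀ (mem_ball_self hr)))
    hF'_meas hF'_le (h_int.div_const _) hF'_deriv).2.differentiableAt

theorem eventually_le_of_limsup_div_eq_zero {β : Type*} {l : Filter β} {f g : β → ℝ≥0∞}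
    (hg : ∀ᶠ t in l, g t ≠ 0) (hg_top : ∀ t, g t ≠ ∞)
    (h : limsup (fun t => f t / g t) l = 0) : ∀ᶠ t in l, f t ≤ g t := by
  filter_upwards [eventually_lt_of_limsup_lt (h ▸ zero_lt_one), hg] with t ht hgt
  exact ((ENNReal.div_lt_iff (Or.inl hgt) (Or.inl (hg_top t))).1 ht).le.trans_eq (one_mul _)

section TailIntegrability

variable {E : Type*} [NormedAddCommGroup E] [MeasurableSpace E] {μ : Measure E}

theorem integral_norm_rpow_le_of_norm_mem_Icc {s : Set E} (hμs : μ s ≠ ∞) {u v : ℝ} (hu : 0 < u)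
    (hsuv : ∀ x ∈ s, ‖x‖ ∈ Icc u v) (p : ℝ) :
    ∫ x in s, ‖‖x‖ ^ p‖ ∂μ ≤ (u ^ p + v ^ p) * μ.real s := by
  refine (Real.le_norm_self _).trans (norm_setIntegral_le_of_norm_le_const hμs.lt_top ?_)
  intro x hx
  rw [norm_norm, Real.norm_of_nonneg (by positivity)]
  exact rpow_le_rpow_add_rpow_of_base_mem_Icc hu (hsuv x hx) p

variable [BorelSpace E]

theorem integrableOn_norm_rpow_of_norm_mem_Icc {s : Set E} (hs : MeasurableSet s)
    (hμs : μ s ≠ ∞) {u v : ℝ} (hu : 0 < u) (hsuv : ∀ x ∈ s, ‖x‖ ∈ Icc u v) (p : ℝ) :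
    IntegrableOn (fun x => ‖x‖ ^ p) s μ := by
  refine Measure.integrableOn_of_bounded hμs
    (by fun_prop : Measurable fun x : E => ‖x‖ ^ p).aestronglyMeasurable (M := u ^ p + v ^ p) ?_
  filter_upwards [ae_restrict_mem hs] with x hx
  rw [Real.norm_of_nonneg (by positivity)]
  exact rpow_le_rpow_add_rpow_of_base_mem_Icc hu (hsuv x hx) p

/-- Dyadic shells: on `t₀ 2^(k+1) ≤ ‖x‖ < t₀ 2^(k+2)` the integral of `‖x‖ ^ p` is
`O((t₀ 2^k) ^ (a + p))`, a geometric sequence when `a + p < 0`. -/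
theorem integrableOn_norm_rpow_of_forall_ge_measure_tail_le {Ω : Set E} (hΩ : MeasurableSet Ω)
    {t₀ a p : ℝ} (ht₀ : 0 < t₀) (hap : a + p < 0)
    (htail : ∀ t ≥ t₀, μ {x ∈ Ω | t < ‖x‖} ≤ ENNReal.ofReal (t ^ a)) :
    IntegrableOn (fun x => ‖x‖ ^ p) {x ∈ Ω | 2 * t₀ ≤ ‖x‖} μ := by
  set u : ℕ → ℝ := fun k => t₀ * 2 ^ k with hu
  have hu0 : ∀ k, 0 < u k := fun k => by positivity
  set A : ℕ → Set E := fun k => {x ∈ Ω | 2 * u k ≤ ‖x‖ ∧ ‖x‖ < 4 * u k}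
  have hA_meas : ∀ k, MeasurableSet (A k) := fun k =>
    hΩ.inter ((measurableSet_le measurable_const measurable_norm).inter
      (measurableSet_lt measurable_norm measurable_const))
  have hA_Icc : ∀ k, ∀ x ∈ A k, ‖x‖ ∈ Icc (2 * u k) (4 * u k) :=
    fun k x hx => ⟨hx.2.1, hx.2.2.le⟩
  have hA_tail : ∀ k, μ (A k) ≤ ENNReal.ofReal (u k ^ a) := fun k =>
    (measure_mono (t := {x ∈ Ω | u k < ‖x‖}) fun x hx => ⟨hx.1, by linarith [hu0 k, hx.2.1]⟩).trans
      (htail _ (le_mul_of_one_le_right ht₀.le (one_le_pow₀ one_le_two)))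
  have hA_fin : ∀ k, μ (A k) ≠ ∞ := fun k => ne_top_of_le_ne_top ENNReal.ofReal_ne_top (hA_tail k)
  have hA_int : ∀ k, IntegrableOn (fun x => ‖x‖ ^ p) (A k) μ := fun k =>
    integrableOn_norm_rpow_of_norm_mem_Icc (hA_meas k) (hA_fin k) (by linarith [hu0 k])
      (hA_Icc k) p
  have hA_le : ∀ k, ∫ x in A k, ‖‖x‖ ^ p‖ ∂μ ≤
      (2 ^ p + 4 ^ p) * t₀ ^ (a + p) * (2 ^ (a + p)) ^ k := by
    intro k
    calc ∫ x in A k, ‖‖x‖ ^ p‖ ∂μ ≤ ((2 * u k) ^ p + (4 * u k) ^ p) * μ.real (A k) :=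
        integral_norm_rpow_le_of_norm_mem_Icc (hA_fin k) (by linarith [hu0 k]) (hA_Icc k) p
      _ ≤ ((2 * u k) ^ p + (4 * u k) ^ p) * u k ^ a :=
        mul_le_mul_of_nonneg_left (ENNReal.toReal_le_of_le_ofReal (by positivity) (hA_tail k))
          (by positivity)
      _ = (2 ^ p + 4 ^ p) * t₀ ^ (a + p) * (2 ^ (a + p)) ^ k := by
        have h_uk : u k ^ p * u k ^ a = t₀ ^ (a + p) * (2 ^ (a + p)) ^ k := by
          rw [← Real.rpow_add (hu0 k), add_comm p a, hu, Real.mul_rpow ht₀.le (by positivity),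
            ← Real.rpow_pow_comm two_pos.le]
        rw [Real.mul_rpow two_pos.le (hu0 k).le, Real.mul_rpow (by norm_num) (hu0 k).le]
        linear_combination (2 ^ p + 4 ^ p) * h_uk
  refine (integrableOn_iUnion_of_summable_integral_norm hA_int
    (Summable.of_nonneg_of_le (fun k => integral_nonneg fun x => norm_nonneg _) hA_le
      ((summable_geometric_of_lt_one (by positivity)
        (Real.rpow_lt_one_of_one_lt_of_neg one_lt_two hap)).mul_left _))).mono_set ?_
  rintro x ⟨hxΩ, hx⟩
  obtain ⟨k, hk⟩ := exists_nat_pow_near (x := ‖x‖ / (2 * t₀))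
    ((one_le_div (by positivity)).2 hx) one_lt_two
  refine mem_iUnion.2 ⟨k, hxΩ, ?_, ?_⟩
  · have := (le_div_iff₀ (by positivity)).1 hk.1
    simp only [hu]; linarith
  · have := (div_lt_iff₀ (by positivity)).1 hk.2
    simp only [hu, pow_succ] at this ⊢; linarith

theorem integrableOn_norm_rpow_of_measure_tail_le {Ω : Set E} (hΩ : MeasurableSet Ω)
    (hfin : μ Ω ≠ ∞) {T a p : ℝ} (hT : 0 < T) (hap : a + p < 0)
    (htail : ∀ᶠ t in atTop, μ {x ∈ Ω | t < ‖x‖} ≤ ENNReal.ofReal (t ^ a)) :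
    IntegrableOn (fun x => ‖x‖ ^ p) {x ∈ Ω | T < ‖x‖} μ := by
  obtain ⟨t₀, ht₀⟩ := eventually_atTop.1 (htail.and (eventually_ge_atTop T))
  have hT₀ : T ≤ t₀ := (ht₀ t₀ le_rfl).2
  have h_near : IntegrableOn (fun x => ‖x‖ ^ p) {x ∈ Ω | T < ‖x‖ ∧ ‖x‖ ≤ 2 * t₀} μ :=
    integrableOn_norm_rpow_of_norm_mem_Icc
      (hΩ.inter ((measurableSet_lt measurable_const measurable_norm).inter
        (measurableSet_le measurable_norm measurable_const)))
      (ne_top_of_le_ne_top hfin (measure_mono fun x hx => hx.1)) hT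
      (fun x hx => ⟨hx.2.1.le, hx.2.2⟩) p
  have h_far := integrableOn_norm_rpow_of_forall_ge_measure_tail_le hΩ (hT.trans_le hT₀) hap
    fun t ht => (ht₀ t ht).1
  refine (h_near.union h_far).mono_set fun x hx => ?_
  rcases le_or_gt ‖x‖ (2 * t₀) with h | h
  · exact Or.inl ⟨hx.1, hx.2, h⟩
  · exact Or.inr ⟨hx.1, h.le⟩

theorem integrableOn_norm_rpow_neg_of_limsup_eq_zero {Ω : Set E} (hΩ : MeasurableSet Ω)
    (hfin : μ Ω ≠ ∞) {T n D : ℝ} (hT : 0 < T)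
    (hD : ∀ r, D < r →
      limsup (fun t : ℝ => μ {x ∈ Ω | t < ‖x‖} / ENNReal.ofReal (t ^ (n + r))) atTop = 0)
    {q : ℝ} (hq : D + n < q) : IntegrableOn (fun x => ‖x‖ ^ (-q)) {x ∈ Ω | T < ‖x‖} μ :=
  integrableOn_norm_rpow_of_measure_tail_le (a := n + (D + (q - n)) / 2) hΩ hfin hT
    (by linarith) (eventually_le_of_limsup_div_eq_zero
      ((eventually_gt_atTop 0).mono fun t ht => by positivity) (fun t => ENNReal.ofReal_ne_top)
      (hD _ (by linarith)))

end TailIntegrability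

section ComparablePowers

variable {α : Type*} [MeasurableSpace α] {μ : Measure α} {φ ψ : α → ℝ}

theorem integrable_ofReal_cpow_of_integrable_rpow (hφ : Measurable φ) (hφ0 : ∀ᵐ x ∂μ, 0 < φ x)
    {w : ℂ} (hw : Integrable (fun x => φ x ^ w.re) μ) :
    Integrable (fun x => (φ x : ℂ) ^ w) μ := by
  refine hw.mono' (by fun_prop : Measurable fun x => (φ x : ℂ) ^ w).aestronglyMeasurable ?_
  filter_upwards [hφ0] with x hx
  rw [Complex.norm_cpow_eq_rpow_re_of_pos hx]

theorem integrable_rpow_of_le_of_le_mul {K : ℝ} (hψ : Measurable ψ) (hψ0 : ∀ᵐ x ∂μ, 0 < ψ x)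
    (hψφ : ∀ᵐ x ∂μ, ψ x ≤ φ x) (hφK : ∀ᵐ x ∂μ, φ x ≤ K * ψ x) {p : ℝ}
    (hp : Integrable (fun x => φ x ^ p) μ) : Integrable (fun x => ψ x ^ p) μ := by
  refine (hp.const_mul (K ^ |p|)).mono'
    (by fun_prop : Measurable fun x => ψ x ^ p).aestronglyMeasurable ?_
  filter_upwards [hψ0, hψφ, hφK] with x h0 h1 h2
  rw [Real.norm_of_nonneg (by positivity)]
  exact rpow_le_rpow_abs_mul_rpow h0 h1 h2 p

theorem differentiableOn_integral_ofReal_cpow_sub_ofReal_cpow (hφ : Measurable φ)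
    (hψ : Measurable ψ) {K C D : ℝ} (hψ0 : ∀ᵐ x ∂μ, 0 < ψ x) (hψφ : ∀ᵐ x ∂μ, ψ x ≤ φ x)
    (hφK : ∀ᵐ x ∂μ, φ x ≤ K * ψ x) (hC : ∀ᵐ x ∂μ, φ x ^ 2 - ψ x ^ 2 ≤ C)
    (hint : ∀ q, D < q → Integrable (fun x => φ x ^ (-q)) μ) :
    DifferentiableOn ℂ (fun s : ℂ => ∫ x, (φ x : ℂ) ^ (-s) - (ψ x : ℂ) ^ (-s) ∂μ)
      {s : ℂ | D - 2 < s.re} := by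
  intro s₀ hs₀
  set ε := (s₀.re - (D - 2)) / 2 with hε_def
  have hε : 0 < ε := by simp only [mem_ofPred_eq] at hs₀; linarith
  set R := ‖s₀‖ + ε
  have hq₁ : D < s₀.re - ε + 2 := by linarith
  have hq₂ : D < s₀.re + ε + 2 := by linarith
  refine (differentiableAt_integral_of_dominated hε
    (bound := fun x => R * K ^ (R + 1) * C *
      (φ x ^ (-(s₀.re + ε + 2)) + φ x ^ (-(s₀.re - ε + 2))))
    (fun s _ => (by fun_prop : Measurable fun x =>
      (φ x : ℂ) ^ (-s) - (ψ x : ℂ) ^ (-s)).aestronglyMeasurable) ?_ ?_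
    (((hint _ hq₂).add (hint _ hq₁)).const_mul _)).differentiableWithinAt
  · filter_upwards [hψ0, hψφ] with x h0 h1
    have hφ0 : (φ x : ℂ) ≠ 0 := Complex.ofReal_ne_zero.2 (h0.trans_le h1).ne'
    have hψ0 : (ψ x : ℂ) ≠ 0 := Complex.ofReal_ne_zero.2 h0.ne'
    exact fun s _ => ((differentiableAt_id.neg.const_cpow (Or.inl hφ0)).sub
      (differentiableAt_id.neg.const_cpow (Or.inl hψ0))).differentiableWithinAt
  · filter_upwards [hψ0, hψφ, hφK, hC] with x h0 h1 h2 h3 s hs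
    have hsR : ‖s‖ ≤ R := (norm_lt_of_mem_ball hs).le
    have hs_re : |s.re - s₀.re| < ε := by
      simpa using (Complex.abs_re_le_norm (s - s₀)).trans_lt (mem_ball_iff_norm.1 hs)
    have hφx : 0 < φ x := h0.trans_le h1
    have hK : 1 ≤ K := by nlinarith
    have hC0 : 0 ≤ C := by nlinarith
    calc ‖(φ x : ℂ) ^ (-s) - (ψ x : ℂ) ^ (-s)‖
        ≤ ‖-s‖ * K ^ |(-s).re - 1| * C * φ x ^ ((-s).re - 2) :=
          norm_ofReal_cpow_sub_ofReal_cpow_le_of_sq_sub_sq_le h0 h1 h2 h3 (-s)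
      _ ≤ R * K ^ (R + 1) * C * (φ x ^ (-(s₀.re + ε + 2)) + φ x ^ (-(s₀.re - ε + 2))) := by
        have h_abs : |(-s).re - 1| ≤ R + 1 := by
          have := Complex.abs_re_le_norm s
          rw [Complex.neg_re]
          exact (abs_sub _ _).trans (by rw [abs_neg, abs_one]; linarith)
        gcongr
        · rwa [norm_neg]
        · exact rpow_le_rpow_add_rpow_of_exponent_mem_Icc hφx
            ⟨by rw [Complex.neg_re]; linarith [le_abs_self (s.re - s₀.re)],
              by rw [Complex.neg_re]; linarith [neg_abs_le (s.re - s₀.re)]⟩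

theorem integral_ofReal_cpow_sub_ofReal_cpow {K : ℝ} (hφ : Measurable φ) (hψ : Measurable ψ)
    (hψ0 : ∀ᵐ x ∂μ, 0 < ψ x) (hψφ : ∀ᵐ x ∂μ, ψ x ≤ φ x) (hφK : ∀ᵐ x ∂μ, φ x ≤ K * ψ x) {w : ℂ}
    (hw : Integrable (fun x => φ x ^ w.re) μ) :
    ∫ x, (φ x : ℂ) ^ w - (ψ x : ℂ) ^ w ∂μ = (∫ x, (φ x : ℂ) ^ w ∂μ) - ∫ x, (ψ x : ℂ) ^ w ∂μ :=
  integral_sub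
    (integrable_ofReal_cpow_of_integrable_rpow hφ
      (by filter_upwards [hψ0, hψφ] with x h0 h1 using h0.trans_le h1) hw)
    (integrable_ofReal_cpow_of_integrable_rpow hψ hψ0
      (integrable_rpow_of_le_of_le_mul hψ hψ0 hψφ hφK hw))

end ComparablePowers

namespace EuclideanSpace

variable {ι : Type*} [Fintype ι]

theorem iSup_abs_le_norm (x : EuclideanSpace ℝ ι) : ⨆ i, |x i| ≤ ‖x‖ :=
  Real.iSup_le (fun i => by simpa using PiLp.norm_apply_le x i) (norm_nonneg x)

theorem norm_le_sqrt_card_mul_iSup_abs (x : EuclideanSpace ℝ ι) :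
    ‖x‖ ≤ √(Fintype.card ι) * ⨆ i, |x i| := by
  have h_sup : 0 ≤ ⨆ i, |x i| := Real.iSup_nonneg fun i => abs_nonneg (x i)
  have h_sq : ‖x‖ ^ 2 ≤ Fintype.card ι * (⨆ i, |x i|) ^ 2 := by
    rw [real_norm_sq_eq]
    calc ∑ i, x i ^ 2 ≤ ∑ _i : ι, (⨆ j, |x j|) ^ 2 := Finset.sum_le_sum fun i _ => by
          rw [← sq_abs]
          gcongr
          exact le_ciSup (Finite.bddAbove_range fun i => |x i|) i
      _ = Fintype.card ι * (⨆ i, |x i|) ^ 2 := by simp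
  rw [← Real.sqrt_sq (norm_nonneg x), ← Real.sqrt_sq h_sup, ← Real.sqrt_mul (by positivity)]
  exact Real.sqrt_le_sqrt h_sq

theorem norm_sq_sub_iSup_abs_sq_le [DecidableEq ι] (x : EuclideanSpace ℝ ι) (i₀ : ι) :
    ‖x‖ ^ 2 - (⨆ i, |x i|) ^ 2 ≤ ∑ i ∈ Finset.univ.erase i₀, x i ^ 2 := by
  have h_i₀ : x i₀ ^ 2 ≤ (⨆ i, |x i|) ^ 2 := by
    rw [← sq_abs]
    gcongr
    exact le_ciSup (Finite.bddAbove_range fun i => |x i|) i₀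
  rw [real_norm_sq_eq, ← Finset.add_sum_erase _ _ (Finset.mem_univ i₀)]
  linarith

end EuclideanSpace

/-- Let `N ≥ 2` and let `Ω ⊆ ℝ^N` be measurable of finite measure, contained
in a cylinder `x₂² + ⋯ + x_N² ≤ C`. Let `T > 0` and `D ∈ ℝ` be such that
`limsup_{t→∞} V_Ω(t)/t^{N+r} = 0` for all `r > D`. Then there is a function `F` holomorphic
on `{Re s > D-2}` which, for `Re s > D`, equals the difference of the Lapidus zeta
functions of `Ω` at infinity computed with the Euclidean norm `|x|` and with the sup-norm
`|x|_∞ = max_i |x_i|`. -/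
theorem stmt_16 (N : ℕ) (hN : 2 ≤ N)
    (Ω : Set (EuclideanSpace ℝ (Fin N)))
    (hΩ : MeasurableSet Ω) (hfin : volume Ω < ⊤)
    (C : ℝ)
    (hcyl : ∀ x ∈ Ω, ∑ i ∈ Finset.univ.erase (⟨0, by omega⟩ : Fin N), (x i) ^ 2 ≤ C)
    (T : ℝ) (hT : 0 < T) (D : ℝ)
    (hD : ∀ r : ℝ, D < r →
      limsup (fun t : ℝ =>
        volume {x ∈ Ω | t < ‖x‖} / ENNReal.ofReal (t ^ ((N : ℝ) + r))) atTop = 0) :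
    ∃ F : ℂ → ℂ,
      DifferentiableOn ℂ F {s : ℂ | D - 2 < s.re} ∧
      ∀ s : ℂ, D < s.re →
        F s = (∫ x in {x ∈ Ω | T < ‖x‖}, (‖x‖ : ℂ) ^ (-s - (N : ℂ))) -
          ∫ x in {x ∈ Ω | T < ‖x‖}, ((⨆ i : Fin N, |x i| : ℝ) : ℂ) ^ (-s - (N : ℂ)) := by
  set S := {x ∈ Ω | T < ‖x‖}
  have h_mem : ∀ᵐ x ∂volume.restrict S, x ∈ Ω ∧ T < ‖x‖ :=
    ae_restrict_mem (hΩ.inter (measurableSet_lt measurable_const measurable_norm))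
  have h_sup_le : ∀ᵐ x ∂volume.restrict S, ⨆ i, |x i| ≤ ‖x‖ :=
    Eventually.of_forall EuclideanSpace.iSup_abs_le_norm
  have h_le_sup : ∀ᵐ x ∂volume.restrict S, ‖x‖ ≤ √N * ⨆ i, |x i| :=
    Eventually.of_forall fun x => by simpa using EuclideanSpace.norm_le_sqrt_card_mul_iSup_abs x
  have h_sup_pos : ∀ᵐ x ∂volume.restrict S, 0 < ⨆ i, |x i| := by
    filter_upwards [h_mem, h_le_sup] with x hx h
    exact pos_of_mul_pos_right (hT.trans (hx.2.trans_le h)) (Real.sqrt_nonneg N)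
  have h_sq : ∀ᵐ x ∂volume.restrict S, ‖x‖ ^ 2 - (⨆ i, |x i|) ^ 2 ≤ C := by
    filter_upwards [h_mem] with x hx
    exact (EuclideanSpace.norm_sq_sub_iSup_abs_sq_le x _).trans (hcyl x hx.1)
  have h_int : ∀ q, D + N < q → Integrable (fun x => ‖x‖ ^ (-q)) (volume.restrict S) :=
    fun q hq => integrableOn_norm_rpow_neg_of_limsup_eq_zero hΩ hfin.ne hT hD hq
  refine ⟨fun s => ∫ x in S, (‖x‖ : ℂ) ^ (-(s + N)) - ((⨆ i, |x i| : ℝ) : ℂ) ^ (-(s + N)),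
    ?_, fun s hs => ?_⟩
  · refine (differentiableOn_integral_ofReal_cpow_sub_ofReal_cpow (φ := fun x => ‖x‖)
      (by fun_prop) (by fun_prop) h_sup_pos h_sup_le h_le_sup h_sq h_int).comp
      (by fun_prop) fun s hs => ?_
    simp only [mem_ofPred_eq, Complex.add_re, Complex.natCast_re] at hs ⊢
    linarith
  · rw [show -s - (N : ℂ) = -(s + N) by ring]
    refine integral_ofReal_cpow_sub_ofReal_cpow (φ := fun x => ‖x‖) (by fun_prop) (by fun_prop)
      h_sup_pos h_sup_le h_le_sup ?_
    simpa only [Complex.neg_re, Complex.add_re, Complex.natCast_re] using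
      h_int (s.re + N) (by linarith)
end
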